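/- arXiv:2210.09468 — 2 statements merged into one kernel-verified Lean document; each statement's English description precedes it below -/
import Mathlib

section
/- Let A and C be independent random n×n real matrices whose entries have finite fourth moments, suppose the columns C e₁, …, C eₙ of C are mutually independent random vectors, and let y ∈ ℝⁿ be fixed. Then E[ ((A y)ᵀ ⊗ Iₙ) · Var(vec(C)) · ((A y) ⊗ Iₙ) ] = (yᵀ ⊗ Iₙ) · ( Σ_{j=1}^{n} E[Aᵀ e_j e_jᵀ A] ⊗ Var(C e_j) ) · (y ⊗ Iₙ). -/
open MeasureTheory ProbabilityTheory Matrix Kronecker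

/-- The product measurable space on real matrices (entrywise). -/
instance matrixMeasurableSpace (n m : ℕ) : MeasurableSpace (Matrix (Fin n) (Fin m) ℝ) :=
  inferInstanceAs (MeasurableSpace (Fin n → Fin m → ℝ))

/-- The covariance matrix `Var(W) = E[(W - E W)(W - E W)ᵀ]` of a random vector `W`. -/
noncomputable def covMatrix {Ω : Type*} [MeasurableSpace Ω] (μ : Measure Ω)
    {ι : Type*} (W : Ω → ι → ℝ) : Matrix ι ι ℝ :=
  Matrix.of fun i j =>
    ∫ ω, (W ω i - ∫ ω', W ω' i ∂μ) * (W ω j - ∫ ω', W ω' j ∂μ) ∂μ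

/-- `vec(M)`: the vertical concatenation of the columns of `M`; the `(j, i)` component is
`M i j`. -/
def matVec {n p : ℕ} (M : Matrix (Fin n) (Fin p) ℝ) : Fin p × Fin n → ℝ :=
  fun jk => M jk.2 jk.1

/-! Independence of the columns makes `Var(vec C)` block diagonal,
`Σ_j e_j e_jᵀ ⊗ Var(C e_j)`. By the mixed-product rule, sandwiching a block `M ⊗ V` between
`(A y)ᵀ ⊗ Iₙ` and `A y ⊗ Iₙ` is sandwiching `(Aᵀ M A) ⊗ V` between `yᵀ ⊗ Iₙ` and `y ⊗ Iₙ`, which is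
linear in `Aᵀ M A`; entrywise expectation commutes with such linear maps. -/

section LinearAlgebra

variable {l m n k : Type*} [Fintype l] [Fintype m]

lemma linearMap_apply_eq_sum_single [DecidableEq l] [DecidableEq m] {p q : Type*}
    (L : Matrix l m ℝ →ₗ[ℝ] Matrix p q ℝ) (M : Matrix l m ℝ) (a : p) (b : q) :
    L M a b = ∑ i, ∑ j, M i j * L (single i j 1) a b := by
  conv_lhs => rw [matrix_eq_sum_single M]
  simp only [map_sum, Matrix.sum_apply]
  refine Finset.sum_congr rfl fun i _ => Finset.sum_congr rfl fun j _ => ?_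
  have hsingle : single i j (M i j) = M i j • single i j 1 := by
    rw [smul_single, smul_eq_mul, mul_one]
  rw [hsingle, map_smul]
  rfl

lemma transpose_mul_single_mul_apply [DecidableEq m] (B D : Matrix m n ℝ) (i j : m) (a b : n) :
    (Bᵀ * single i j (1 : ℝ) * D) a b = B i a * D j b := by
  simp [Matrix.mul_apply, single_apply, ite_and, Finset.sum_ite_eq]

variable [Fintype n] [Fintype k] [DecidableEq k]

def kroneckerSandwich (x : n → ℝ) (V : Matrix k k ℝ) :
    Matrix n n ℝ →ₗ[ℝ] Matrix (Unit × k) (Unit × k) ℝ :=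
  mulLeftLinearMap _ ℝ (replicateRow Unit x ⊗ₖ (1 : Matrix k k ℝ)) ∘ₗ
    mulRightLinearMap _ ℝ (replicateCol Unit x ⊗ₖ (1 : Matrix k k ℝ)) ∘ₗ
    (kroneckerBilinear (R := ℝ)).flip V

lemma kroneckerSandwich_apply (x : n → ℝ) (V : Matrix k k ℝ) (M : Matrix n n ℝ) :
    kroneckerSandwich x V M = (replicateRow Unit x ⊗ₖ (1 : Matrix k k ℝ)) * (M ⊗ₖ V) *
      (replicateCol Unit x ⊗ₖ (1 : Matrix k k ℝ)) :=
  (Matrix.mul_assoc _ _ _).symm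

lemma kroneckerSandwich_mulVec (B : Matrix m n ℝ) (x : n → ℝ) (V : Matrix k k ℝ)
    (M : Matrix m m ℝ) :
    kroneckerSandwich (B *ᵥ x) V M = kroneckerSandwich x V (Bᵀ * M * B) := by
  rw [kroneckerSandwich_apply, kroneckerSandwich_apply, replicateRow_mulVec, replicateCol_mulVec,
    transpose_mul, transpose_replicateCol]
  simp only [← mul_kronecker_mul, Matrix.mul_assoc, Matrix.one_mul, Matrix.mul_one]

end LinearAlgebra

section Expectation

variable {Ω : Type*} [MeasurableSpace Ω] {μ : Measure Ω}

section LinearImage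

variable {l m p q : Type*} [Fintype l] [Fintype m] [DecidableEq l] [DecidableEq m]

lemma integrable_linearMap_apply (L : Matrix l m ℝ →ₗ[ℝ] Matrix p q ℝ) {M : Ω → Matrix l m ℝ}
    (hM : ∀ i j, Integrable (fun ω => M ω i j) μ) (a : p) (b : q) :
    Integrable (fun ω => L (M ω) a b) μ := by
  simp_rw [linearMap_apply_eq_sum_single L (M _)]
  exact integrable_finsetSum _ fun i _ => integrable_finsetSum _ fun j _ => (hM i j).mul_const _

lemma integral_linearMap_apply (L : Matrix l m ℝ →ₗ[ℝ] Matrix p q ℝ) {M : Ω → Matrix l m ℝ}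
    (hM : ∀ i j, Integrable (fun ω => M ω i j) μ) (a : p) (b : q) :
    ∫ ω, L (M ω) a b ∂μ = L (of fun i j => ∫ ω, M ω i j ∂μ) a b := by
  simp_rw [linearMap_apply_eq_sum_single L (M _), linearMap_apply_eq_sum_single L (of _)]
  rw [integral_finsetSum _ fun i _ => integrable_finsetSum _ fun j _ => (hM i j).mul_const _]
  refine Finset.sum_congr rfl fun i _ => ?_
  rw [integral_finsetSum _ fun j _ => (hM i j).mul_const _]
  simp_rw [integral_mul_const, of_apply]

end LinearImage

lemma covMatrix_apply {ι : Type*} (W : Ω → ι → ℝ) (i j : ι) :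
    covMatrix μ W i j = cov[fun ω => W ω i, fun ω => W ω j; μ] := rfl

theorem covMatrix_matVec_eq_sum_single_kronecker {n p : ℕ} (C : Ω → Matrix (Fin n) (Fin p) ℝ)
    (hC : ∀ i j, MemLp (fun ω => C ω i j) 2 μ) (hindep : iIndepFun (fun j ω i => C ω i j) μ) :
    covMatrix μ (fun ω => matVec (C ω))
      = ∑ j, single j j 1 ⊗ₖ covMatrix μ (fun ω i => C ω i j) := by
  ext ⟨j, i⟩ ⟨q, k⟩
  simp only [Matrix.sum_apply, kronecker_apply, single_apply, covMatrix_apply, matVec]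
  rw [Finset.sum_eq_single j (fun c _ hc => by simp [hc]) (by simp)]
  by_cases hjq : j = q
  · subst hjq
    simp
  · simp only [hjq, and_false, if_false, zero_mul]
    refine IndepFun.covariance_eq_zero ?_ (hC i j) (hC k q)
    exact (hindep.indepFun hjq).comp (measurable_pi_apply i) (measurable_pi_apply k)

end Expectation

theorem expected_kron_quadratic_form_general
    {Ω : Type*} [MeasurableSpace Ω] (μ : Measure Ω) [IsProbabilityMeasure μ]
    (n : ℕ) (A C : Ω → Matrix (Fin n) (Fin n) ℝ)
    (hA4 : ∀ i j, MemLp (fun ω => A ω i j) 4 μ)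
    (hC4 : ∀ i j, MemLp (fun ω => C ω i j) 4 μ)
    (hindepCols : iIndepFun (m := fun _ : Fin n => inferInstanceAs (MeasurableSpace (Fin n → ℝ)))
      (fun j ω => fun i => C ω i j) μ)
    (y : Fin n → ℝ) :
    (Matrix.of fun a b =>
        ∫ ω, ((Matrix.replicateRow Unit ((A ω).mulVec y) ⊗ₖ (1 : Matrix (Fin n) (Fin n) ℝ)) *
                covMatrix μ (fun ω' => matVec (C ω')) *
                (Matrix.replicateCol Unit ((A ω).mulVec y) ⊗ₖ (1 : Matrix (Fin n) (Fin n) ℝ))) a b ∂μ)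
      = (Matrix.replicateRow Unit y ⊗ₖ (1 : Matrix (Fin n) (Fin n) ℝ)) *
          (∑ j : Fin n,
            (Matrix.of fun a b =>
              ∫ ω, ((A ω)ᵀ * Matrix.single j j (1 : ℝ) * A ω) a b ∂μ) ⊗ₖ
              covMatrix μ (fun ω i => C ω i j)) *
          (Matrix.replicateCol Unit y ⊗ₖ (1 : Matrix (Fin n) (Fin n) ℝ)) := by
  have hA2 (i j : Fin n) : MemLp (fun ω => A ω i j) 2 μ := (hA4 i j).mono_exponent (by norm_num)
  have hC2 (i j : Fin n) : MemLp (fun ω => C ω i j) 2 μ := (hC4 i j).mono_exponent (by norm_num)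
  have hint (j p q : Fin n) :
      Integrable (fun ω => ((A ω)ᵀ * single j j (1 : ℝ) * A ω) p q) μ := by
    simp_rw [transpose_mul_single_mul_apply]
    exact (hA2 j p).integrable_mul (hA2 j q)
  have hintegrand (ω : Ω) : (replicateRow Unit (A ω *ᵥ y) ⊗ₖ (1 : Matrix (Fin n) (Fin n) ℝ)) *
      covMatrix μ (fun ω' => matVec (C ω')) *
      (replicateCol Unit (A ω *ᵥ y) ⊗ₖ (1 : Matrix (Fin n) (Fin n) ℝ))
        = ∑ j, kroneckerSandwich y (covMatrix μ (fun ω i => C ω i j))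
            ((A ω)ᵀ * single j j 1 * A ω) := by
    rw [covMatrix_matVec_eq_sum_single_kronecker C hC2 hindepCols, Matrix.mul_sum, Matrix.sum_mul]
    simp only [← kroneckerSandwich_apply, kroneckerSandwich_mulVec]
  ext a b
  simp only [of_apply, hintegrand, Matrix.sum_apply]
  rw [integral_finsetSum _ fun j _ => integrable_linearMap_apply _ (hint j) a b]
  simp_rw [integral_linearMap_apply _ (hint _), kroneckerSandwich_apply]
  rw [Matrix.mul_sum, Matrix.sum_mul, Matrix.sum_apply]

/-- For independent random `n×n` matrices `A` and `C`, with the columns of `C` mutually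
independent, and a fixed `y ∈ ℝⁿ`:
`E[((A y)ᵀ ⊗ Iₙ) · Var(vec C) · ((A y) ⊗ Iₙ)]
  = (yᵀ ⊗ Iₙ) · (Σ_j E[Aᵀ e_j e_jᵀ A] ⊗ Var(C e_j)) · (y ⊗ Iₙ)`. -/
theorem expected_kron_quadratic_form
    {Ω : Type*} [MeasurableSpace Ω] (μ : Measure Ω) [IsProbabilityMeasure μ]
    (n : ℕ) (A C : Ω → Matrix (Fin n) (Fin n) ℝ)
    (hAmeas : Measurable A) (hCmeas : Measurable C)
    (hA4 : ∀ i j, MemLp (fun ω => A ω i j) 4 μ)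
    (hC4 : ∀ i j, MemLp (fun ω => C ω i j) 4 μ)
    (hindepAC : IndepFun A C μ)
    (hindepCols : iIndepFun (m := fun _ : Fin n => inferInstanceAs (MeasurableSpace (Fin n → ℝ)))
      (fun j ω => fun i => C ω i j) μ)
    (y : Fin n → ℝ) :
    (Matrix.of fun a b =>
        ∫ ω, ((Matrix.replicateRow Unit ((A ω).mulVec y) ⊗ₖ (1 : Matrix (Fin n) (Fin n) ℝ)) *
                covMatrix μ (fun ω' => matVec (C ω')) *
                (Matrix.replicateCol Unit ((A ω).mulVec y) ⊗ₖ (1 : Matrix (Fin n) (Fin n) ℝ))) a b ∂μ)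
      = (Matrix.replicateRow Unit y ⊗ₖ (1 : Matrix (Fin n) (Fin n) ℝ)) *
          (∑ j : Fin n,
            (Matrix.of fun a b =>
              ∫ ω, ((A ω)ᵀ * Matrix.single j j (1 : ℝ) * A ω) a b ∂μ) ⊗ₖ
              covMatrix μ (fun ω i => C ω i j)) *
          (Matrix.replicateCol Unit y ⊗ₖ (1 : Matrix (Fin n) (Fin n) ℝ)) :=
  expected_kron_quadratic_form_general μ n A C hA4 hC4 hindepCols y
end

section
/- For every λ > 0, the function g : (0, ∞) → ℝ defined by g(y) = (2/3)·ln(y) − (y^{1/3}/λ)⁵ is concave on (0, ∞). Consequently, the probability density function of the cube X³ of a Weibull random variable X with shape parameter 5 and scale parameter λ, namely y ↦ (5/(3λ⁵)) · y^{2/3} · exp(−(y^{1/3}/λ)⁵) on (0, ∞), is log-concave on (0, ∞). -/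
/-!
Since `(y^{1/3}/λ)⁵ = λ⁻⁵ y^{5/3}` and `y ↦ y^{5/3}` is convex, `g` is a nonnegative
multiple of the concave `log` minus a nonnegative multiple of a convex function. The
logarithm of the density is `g` plus the constant `log (5/(3λ⁵))`.
-/

open Real Set

lemma concaveOn_mul_log_sub_mul_rpow {a c p : ℝ} (ha : 0 ≤ a) (hc : 0 ≤ c) (hp : 1 ≤ p) :
    ConcaveOn ℝ (Ioi 0) (fun y : ℝ => a * log y - c * y ^ p) :=
  (strictConcaveOn_log_Ioi.concaveOn.smul ha).sub
    (((convexOn_rpow hp).subset Ioi_subset_Ici_self (convex_Ioi 0)).smul hc)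

lemma rpow_div_pow_eq {y : ℝ} (hy : 0 ≤ y) (r lam : ℝ) (n : ℕ) :
    (y ^ r / lam) ^ n = (lam ^ n)⁻¹ * y ^ (r * n) := by
  rw [div_pow, ← rpow_natCast (y ^ r), ← rpow_mul hy, div_eq_inv_mul]

lemma log_mul_rpow_mul_exp {C y : ℝ} (hC : 0 < C) (hy : 0 < y) (q u : ℝ) :
    log (C * y ^ q * exp u) = log C + (q * log y + u) := by
  rw [log_mul (by positivity) (exp_ne_zero u), log_mul hC.ne' (rpow_pos_of_pos hy q).ne',
    log_rpow hy, log_exp, add_assoc]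

/-- For every `λ > 0`, the function `g(y) = (2/3)·ln y − (y^{1/3}/λ)⁵` is concave on
`(0, ∞)`; consequently, the probability density function of the cube of a
`Weibull(5, λ)` random variable, `y ↦ (5/(3λ⁵)) · y^{2/3} · exp(−(y^{1/3}/λ)⁵)`, is
log-concave on `(0, ∞)`. -/
theorem weibull_cube_density_log_concave (lam : ℝ) (hlam : 0 < lam) :
    ConcaveOn ℝ (Set.Ioi (0 : ℝ))
      (fun y : ℝ => (2 / 3) * Real.log y - (y ^ ((1 : ℝ) / 3) / lam) ^ (5 : ℕ)) ∧
    ConcaveOn ℝ (Set.Ioi (0 : ℝ))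
      (fun y : ℝ => Real.log
        ((5 / (3 * lam ^ (5 : ℕ))) * y ^ ((2 : ℝ) / 3) *
          Real.exp (-(y ^ ((1 : ℝ) / 3) / lam) ^ (5 : ℕ)))) := by
  have hg : ConcaveOn ℝ (Ioi 0)
      (fun y : ℝ => (2 / 3) * log y - (y ^ ((1 : ℝ) / 3) / lam) ^ (5 : ℕ)) := by
    refine (concaveOn_mul_log_sub_mul_rpow (by norm_num : (0 : ℝ) ≤ 2 / 3)
      (inv_nonneg.2 (pow_nonneg hlam.le 5)) (by norm_num : (1 : ℝ) ≤ 1 / 3 * (5 : ℕ))).congr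
      fun y hy => ?_
    rw [rpow_div_pow_eq hy.le]
  refine ⟨hg, (hg.add_const (log (5 / (3 * lam ^ 5)))).congr fun y hy => ?_⟩
  rw [log_mul_rpow_mul_exp (by positivity) hy, Pi.add_apply, add_comm, sub_eq_add_neg]
end
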